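/- In the setting of the SDR mapping cone: if W ⊆ B(H) and W̃ ⊆ B(H)* contain order units—i.e., a strictly positive operator e ∈ W and a strictly positive-definite functional ẽ ∈ W̃—then the Choi matrix φ(e ⊗ ẽ) of the completely positive map X ↦ ẽ(X)·e is strictly positive definite. Consequently 𝒲 = φ(S) possesses an order unit and its positive part is generating: 𝒲⁺ − 𝒲⁺ = 𝒲, where 𝒲⁺ = 𝒲 ∩ S⁺. -/

import Mathlib

/-!
Since `ẽ = tr(σ₀ ·)`, the Choi matrix of `X ↦ ẽ(X) e` is the Kronecker product `σ₀ᵀ ⊗ e` of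
two positive definite matrices. The map lies in `S` because hermiticity-preserving functionals
take real values on hermitian matrices. Every element of `φ(S)` is hermitian, and in the
C⋆-order a selfadjoint `a` is dominated by a multiple of any strictly positive `E`: if `r ≤ E`
with `r > 0`, then `a ≤ ‖a‖ ≤ ((‖a‖ + 1) / r) E`. So `E` is an order unit of `φ(S)`, and
`A = tE - (tE - A)` writes each element as a difference of positive ones.
-/

open Matrix
open scoped ComplexOrder

/-- `Mat n` is `B(H)` for `H = ℂⁿ`: the `n × n` complex matrices. -/
abbrev Mat (n : ℕ) := Matrix (Fin n) (Fin n) ℂ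

/-- The Choi matrix of a linear map `Φ` on `B(ℂⁿ)`, as a real-linear map (the inverse
of the Choi–Jamiołkowski isomorphism `χ`). -/
noncomputable def choiR {n : ℕ} :
    (Mat n →ₗ[ℂ] Mat n) →ₗ[ℝ] Matrix (Fin n × Fin n) (Fin n × Fin n) ℂ where
  toFun Φ := Matrix.of fun p q => Φ (Matrix.single p.1 q.1 (1 : ℂ)) p.2 q.2
  map_add' F G := by
    ext p q
    simp
  map_smul' r F := by
    ext p q
    simp

/-- The (real) subspace `S ⊆ B(H) ⊗ B(H)*` of hermiticity-preserving maps `F` with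
`F(W) ⊆ W` and `F*(W̃) ⊆ W̃`. -/
noncomputable def stabSpace {n : ℕ} (W : Submodule ℝ (Mat n))
    (Wt : Submodule ℝ (Module.Dual ℂ (Mat n))) :
    Submodule ℝ (Mat n →ₗ[ℂ] Mat n) where
  carrier := {F | (∀ X : Mat n, F Xᴴ = (F X)ᴴ) ∧
    (∀ X ∈ W, F X ∈ W) ∧ (∀ σ ∈ Wt, σ ∘ₗ F ∈ Wt)}
  add_mem' := by
    rintro F G ⟨hF0, hF1, hF2⟩ ⟨hG0, hG1, hG2⟩
    refine ⟨fun X => ?_, fun X hX => ?_, fun σ hσ => ?_⟩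
    · simp [hF0 X, hG0 X]
    · exact Submodule.add_mem _ (hF1 X hX) (hG1 X hX)
    · have h : σ ∘ₗ (F + G) = σ ∘ₗ F + σ ∘ₗ G := by ext X; simp
      rw [h]; exact Submodule.add_mem _ (hF2 σ hσ) (hG2 σ hσ)
  zero_mem' := by
    refine ⟨fun X => by simp, fun X _ => by simp, fun σ hσ => ?_⟩
    have h : σ ∘ₗ (0 : Mat n →ₗ[ℂ] Mat n) = 0 := by ext X; simp
    rw [h]; exact Submodule.zero_mem _
  smul_mem' := by
    rintro r F ⟨hF0, hF1, hF2⟩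
    refine ⟨fun X => ?_, fun X hX => ?_, fun σ hσ => ?_⟩
    · show r • F Xᴴ = (r • F X)ᴴ
      rw [hF0 X, Matrix.conjTranspose_smul, star_trivial]
    · exact Submodule.smul_mem _ r (hF1 X hX)
    · have h : σ ∘ₗ (r • F) = r • (σ ∘ₗ F) := by ext X; simp
      rw [h]; exact Submodule.smul_mem _ r (hF2 σ hσ)

open scoped Kronecker

lemma IsStrictlyPositive.exists_le_smul {A : Type*} [CStarAlgebra A] [PartialOrder A]
    [StarOrderedRing A] {e a : A} (he : IsStrictlyPositive e) (ha : IsSelfAdjoint a) :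
    ∃ t : ℝ, 0 < t ∧ a ≤ t • e := by
  cases subsingleton_or_nontrivial A
  · exact ⟨1, one_pos, (Subsingleton.elim a _).le⟩
  obtain ⟨r, hr, hre⟩ : ∃ r > 0, algebraMap ℝ A r ≤ e :=
    (CFC.exists_pos_algebraMap_le_iff he.isSelfAdjoint).2 fun x hx ↦ he.spectrum_pos hx
  refine ⟨(‖a‖ + 1) / r, by positivity, ?_⟩
  calc a ≤ algebraMap ℝ A ‖a‖ := ha.le_algebraMap_norm_self
    _ ≤ algebraMap ℝ A (‖a‖ + 1) := by gcongr; linarith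
    _ = ((‖a‖ + 1) / r) • algebraMap ℝ A r := by
        rw [Algebra.smul_def, ← map_mul, div_mul_cancel₀ _ hr.ne']
    _ ≤ ((‖a‖ + 1) / r) • e := by gcongr

namespace Matrix

variable {m : Type*}

open scoped Matrix.Norms.L2Operator MatrixOrder in
lemma PosDef.exists_smul_sub_posSemidef [Fintype m] [DecidableEq m] {E A : Matrix m m ℂ} (hE : E.PosDef)
    (hA : A.IsHermitian) : ∃ t : ℝ, 0 < t ∧ (t • E - A).PosSemidef :=
  hE.isStrictlyPositive.exists_le_smul hA

lemma PosDef.exists_smul_sub_mem_posSemidef [Fintype m] [DecidableEq m] {V : Submodule ℝ (Matrix m m ℂ)}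
    (hV : ∀ A ∈ V, A.IsHermitian) {E : Matrix m m ℂ} (hE : E.PosDef) (hEV : E ∈ V) :
    ∀ A ∈ V, ∃ t : ℝ, 0 < t ∧ t • E - A ∈ V ∧ (t • E - A).PosSemidef := by
  intro A hA
  obtain ⟨t, ht, hPSD⟩ := hE.exists_smul_sub_posSemidef (hV A hA)
  exact ⟨t, ht, V.sub_mem (V.smul_mem t hEV) hA, hPSD⟩

lemma setOf_sub_posSemidef_eq_of_orderUnit {V : Submodule ℝ (Matrix m m ℂ)}
    {E : Matrix m m ℂ} (hE : E.PosSemidef) (hEV : E ∈ V)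
    (hunit : ∀ A ∈ V, ∃ t : ℝ, 0 < t ∧ t • E - A ∈ V ∧ (t • E - A).PosSemidef) :
    {A : Matrix m m ℂ | ∃ B C : Matrix m m ℂ,
        B ∈ V ∧ B.PosSemidef ∧ C ∈ V ∧ C.PosSemidef ∧ A = B - C} = (V : Set _) := by
  ext A
  constructor
  · rintro ⟨B, C, hB, -, hC, -, rfl⟩
    exact V.sub_mem hB hC
  · intro hA
    obtain ⟨t, ht, hmem, hPSD⟩ := hunit A hA
    exact ⟨t • E, t • E - A, V.smul_mem t hEV, hE.smul ht.le, hmem, hPSD,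
      (sub_sub_cancel _ _).symm⟩

end Matrix

lemma Module.Dual.ofReal_re_apply_of_isHermitian {m : Type*} {σ : Module.Dual ℂ (Matrix m m ℂ)}
    (hσ : ∀ X, σ Xᴴ = star (σ X)) {X : Matrix m m ℂ} (hX : X.IsHermitian) :
    ((σ X).re : ℂ) = σ X :=
  Complex.conj_eq_iff_re.mp <| by
    have h := hσ X
    rw [hX.eq] at h
    exact h.symm

lemma choiR_smulRight_of_trace {n : ℕ} {ee : Module.Dual ℂ (Mat n)} {σ₀ : Mat n}
    (heeForm : ∀ X : Mat n, ee X = (σ₀ * X).trace) (e : Mat n) :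
    choiR (ee.smulRight e) = σ₀ᵀ ⊗ₖ e := by
  ext p q
  simp [choiR, heeForm, trace_mul_single, kroneckerMap_apply]

lemma choiR_isHermitian {n : ℕ} {F : Mat n →ₗ[ℂ] Mat n} (hF : ∀ X : Mat n, F Xᴴ = (F X)ᴴ) :
    (choiR F).IsHermitian := by
  ext p q
  have h : single q.1 p.1 (1 : ℂ) = (single p.1 q.1 1)ᴴ := by simp
  simp only [choiR, LinearMap.coe_mk, AddHom.coe_mk, conjTranspose_apply, of_apply]
  rw [h, hF, conjTranspose_apply, star_star]

lemma smulRight_mem_stabSpace {n : ℕ} {W : Submodule ℝ (Mat n)} (hW : ∀ A ∈ W, A.IsHermitian)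
    {Wt : Submodule ℝ (Module.Dual ℂ (Mat n))} (hWt : ∀ σ ∈ Wt, ∀ X : Mat n, σ Xᴴ = star (σ X))
    {e : Mat n} (he : e ∈ W) (heH : e.IsHermitian) {ee : Module.Dual ℂ (Mat n)} (hee : ee ∈ Wt) :
    ee.smulRight e ∈ stabSpace W Wt := by
  refine ⟨fun X => ?_, fun X hX => ?_, fun σ hσ => ?_⟩
  · simp [hWt ee hee X, conjTranspose_smul, heH.eq]
  · rw [LinearMap.smulRight_apply,
      ← Module.Dual.ofReal_re_apply_of_isHermitian (hWt ee hee) (hW X hX), Complex.coe_smul]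
    exact W.smul_mem _ he
  · have h : σ ∘ₗ ee.smulRight e = (σ e).re • ee := by
      ext X
      simp only [LinearMap.comp_apply, LinearMap.smulRight_apply, map_smul, smul_eq_mul,
        LinearMap.smul_apply, Complex.real_smul,
        Module.Dual.ofReal_re_apply_of_isHermitian (hWt σ hσ) heH, mul_comm]
    rw [h]
    exact Wt.smul_mem _ hee

/-- if `W ⊆ B(H)` and `W̃ ⊆ B(H)*` contain order units — a strictly
positive `e ∈ W` and a strictly positive-definite functional `ẽ = tr(σ₀ ·) ∈ W̃` —
then the Choi matrix of the completely positive map `X ↦ ẽ(X) e` is strictly positive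
definite; consequently `𝒲 = φ(S)` has an order unit and its positive part is
generating: `𝒲⁺ − 𝒲⁺ = 𝒲`. -/
theorem choi_of_order_unit_posdef_and_generating
    {n : ℕ} (W : Submodule ℝ (Mat n)) (hW : ∀ A ∈ W, A.IsHermitian)
    (Wt : Submodule ℝ (Module.Dual ℂ (Mat n)))
    (hWt : ∀ σ ∈ Wt, ∀ X : Mat n, σ Xᴴ = star (σ X))
    (e : Mat n) (he : e ∈ W) (hePD : e.PosDef)
    (ee : Module.Dual ℂ (Mat n)) (hee : ee ∈ Wt)
    (σ₀ : Mat n) (hσ₀ : σ₀.PosDef) (heeForm : ∀ X : Mat n, ee X = (σ₀ * X).trace) :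
    -- the Choi matrix of X ↦ ẽ(X) e is strictly positive definite
    (choiR (ee.smulRight e)).PosDef ∧
    -- 𝒲 = φ(S) possesses an order unit, namely φ(e ⊗ ẽ)
    (choiR (ee.smulRight e) ∈ Submodule.map choiR (stabSpace W Wt) ∧
      ∀ A ∈ Submodule.map choiR (stabSpace W Wt), ∃ lam : ℝ, 0 < lam ∧
        (lam • choiR (ee.smulRight e) - A) ∈ Submodule.map choiR (stabSpace W Wt) ∧
        (lam • choiR (ee.smulRight e) - A).PosSemidef) ∧
    -- the positive part of 𝒲 is generating: 𝒲⁺ − 𝒲⁺ = 𝒲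
    {A : Matrix (Fin n × Fin n) (Fin n × Fin n) ℂ |
        ∃ B C : Matrix (Fin n × Fin n) (Fin n × Fin n) ℂ,
          B ∈ Submodule.map choiR (stabSpace W Wt) ∧ B.PosSemidef ∧
          C ∈ Submodule.map choiR (stabSpace W Wt) ∧ C.PosSemidef ∧
          A = B - C}
      = (Submodule.map choiR (stabSpace W Wt) : Set _) := by
  have hchoi_herm : ∀ A ∈ Submodule.map choiR (stabSpace W Wt), A.IsHermitian := by
    rintro _ ⟨F, hF, rfl⟩
    exact choiR_isHermitian hF.1
  have hEPD : (choiR (ee.smulRight e)).PosDef := by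
    rw [choiR_smulRight_of_trace heeForm]
    exact hσ₀.transpose.kronecker hePD
  have hEV : choiR (ee.smulRight e) ∈ Submodule.map choiR (stabSpace W Wt) :=
    Submodule.mem_map_of_mem (smulRight_mem_stabSpace hW hWt he hePD.isHermitian hee)
  have hunit := hEPD.exists_smul_sub_mem_posSemidef hchoi_herm hEV
  exact ⟨hEPD, ⟨hEV, hunit⟩,
    Matrix.setOf_sub_posSemidef_eq_of_orderUnit hEPD.posSemidef hEV hunit⟩
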